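/- arXiv:2402.00772 — 3 statements merged into one kernel-verified Lean document; each statement's English description precedes it below -/
import Mathlib

section
/- Strong duality for the second-stage risk limiting dispatch linear program: for every u, d ∈ ℝ^N there exists a dual feasible triple (λ, ν⁺, ν⁻) whose dual objective value attains the primal optimum, i.e., λᵀ(d − u) − (f^max)ᵀ(ν⁺ + ν⁻) = Q(u, d). -/
/-- The second-stage value function `Q(u, d)` of the risk limiting dispatch LP:
the infimum of `βᵀ max(g, 0)` over pairs `(g, θ)` satisfying the power-balance
equality `u + g − d = Bθ` and the branch capacity constraints `−fmax ≤ Fθ ≤ fmax`. -/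
noncomputable def Qval {N L : ℕ} (B : Matrix (Fin N) (Fin N) ℝ) (F : Matrix (Fin L) (Fin N) ℝ)
    (β : Fin N → ℝ) (fmax : Fin L → ℝ) (u d : Fin N → ℝ) : ℝ :=
  sInf {c : ℝ | ∃ g θ : Fin N → ℝ,
    c = ∑ i, β i * max (g i) 0 ∧
    (∀ i, u i + g i - d i = B.mulVec θ i) ∧
    (∀ j, -fmax j ≤ F.mulVec θ j) ∧
    (∀ j, F.mulVec θ j ≤ fmax j)}

/-!
Replacing `max(g, 0)` by a variable `p` with `p ≥ 0` and `p ≥ g = Bθ + d − u` turns `Q(u, d)` into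
the value of a linear program in `(p, θ)`. It is feasible (`θ = 0`) and bounded below by `0`
since `β ≥ 0`, so LP strong duality applies, and its dual is the dual in the statement.

Strong duality comes from Farkas' lemma: a point outside a finitely generated cone is separated
from it by a hyperplane. Separation needs the cone to be closed, which follows by induction on the
generators: if they are linearly independent the cone is the image of an orthant under an
injective linear map, and otherwise every point of the cone is a nonnegative combination with one
generator less (move along a linear dependence until a coefficient vanishes).
-/

open Finset Matrix

section ConeHull

variable {ι E : Type*} [AddCommGroup E] [Module ℝ E] {v : ι → E}

variable (v) in
def coneHull (s : Finset ι) : Set E :=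
  {x | ∃ c : ι → ℝ, (∀ i ∈ s, 0 ≤ c i) ∧ ∑ i ∈ s, c i • v i = x}

lemma mem_coneHull [DecidableEq ι] {s : Finset ι} {i : ι} (hi : i ∈ s) : v i ∈ coneHull v s :=
  ⟨fun j => if j = i then 1 else 0, fun j _ => by positivity, by simp [hi]⟩

lemma zero_mem_coneHull {s : Finset ι} : (0 : E) ∈ coneHull v s :=
  ⟨0, fun _ _ => le_rfl, by simp⟩

lemma smul_add_smul_mem_coneHull {s : Finset ι} {x y : E} (hx : x ∈ coneHull v s)
    (hy : y ∈ coneHull v s) {a b : ℝ} (ha : 0 ≤ a) (hb : 0 ≤ b) :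
    a • x + b • y ∈ coneHull v s := by
  obtain ⟨c, hc, rfl⟩ := hx
  obtain ⟨d, hd, rfl⟩ := hy
  exact ⟨a • c + b • d, fun i hi => add_nonneg (mul_nonneg ha (hc i hi)) (mul_nonneg hb (hd i hi)),
    by simp [add_smul, mul_smul, smul_sum, sum_add_distrib]⟩

lemma coneHull_mono [DecidableEq ι] {s t : Finset ι} (hst : s ⊆ t) :
    coneHull v s ⊆ coneHull v t := by
  rintro x ⟨c, hc, rfl⟩
  refine ⟨fun i => if i ∈ s then c i else 0, fun i _ => ?_, ?_⟩
  · dsimp only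
    split_ifs with hi
    exacts [hc i hi, le_rfl]
  · simp only [ite_smul, zero_smul, sum_ite_mem, inter_eq_right.mpr hst]

lemma exists_sub_mul_nonneg_eq_zero {s : Finset ι} {c g : ι → ℝ} (hc : ∀ i ∈ s, 0 ≤ c i)
    (hg : ∃ i ∈ s, 0 < g i) :
    ∃ t : ℝ, ∃ i₀ ∈ s, (∀ i ∈ s, 0 ≤ c i - t * g i) ∧ c i₀ - t * g i₀ = 0 := by
  obtain ⟨i₀, hi₀, hmin⟩ := (s.filter (0 < g ·)).exists_min_image (fun i => c i / g i)
    (by simpa [Finset.Nonempty] using hg)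
  rw [mem_filter] at hi₀
  refine ⟨c i₀ / g i₀, i₀, hi₀.1, fun i hi => ?_, by field_simp [hi₀.2.ne']; ring⟩
  rcases lt_or_ge 0 (g i) with hgi | hgi
  · have := hmin i (mem_filter.mpr ⟨hi, hgi⟩)
    rw [le_div_iff₀ hgi] at this
    linarith
  · have := mul_nonpos_of_nonneg_of_nonpos (div_nonneg (hc i₀ hi₀.1) hi₀.2.le) hgi
    linarith [hc i hi]

lemma coneHull_subset_biUnion_erase [DecidableEq ι] {s : Finset ι}
    (hv : ¬LinearIndepOn ℝ v s) : coneHull v s ⊆ ⋃ i ∈ s, coneHull v (s.erase i) := by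
  obtain ⟨g, hg, i₁, hi₁, hgi₁⟩ := not_linearIndepOn_finset_iff.mp hv
  wlog hpos : ∃ i ∈ s, 0 < g i generalizing g
  · refine this (-g) (by simp [neg_smul, hg]) (by simpa using hgi₁) ⟨i₁, hi₁, ?_⟩
    push Not at hpos
    simpa using (hpos i₁ hi₁).lt_of_ne hgi₁
  rintro x ⟨c, hc, rfl⟩
  obtain ⟨t, i₀, hi₀, hnonneg, hzero⟩ := exists_sub_mul_nonneg_eq_zero hc hpos
  refine Set.mem_iUnion₂.mpr ⟨i₀, hi₀, fun i => c i - t * g i,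
    fun i hi => hnonneg i (mem_of_mem_erase hi), ?_⟩
  rw [sum_erase _ (by simp only [hzero, zero_smul])]
  simp only [sub_smul, sum_sub_distrib, mul_smul, ← smul_sum, hg, smul_zero, sub_zero]

lemma coneHull_eq_image_linearCombination (s : Finset ι) :
    coneHull v s = Fintype.linearCombination ℝ (fun i : (s : Set ι) => v i) '' Set.Ici 0 := by
  classical
  ext x
  constructor
  · rintro ⟨c, hc, rfl⟩
    exact ⟨fun i => c i, fun i => hc i i.2, by
      simp [Fintype.linearCombination_apply, sum_attach s (fun i => c i • v i)]⟩
  · rintro ⟨c, hc, rfl⟩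
    refine ⟨fun i => if h : i ∈ s then c ⟨i, h⟩ else 0,
      fun i hi => by simpa [hi] using hc ⟨i, hi⟩, ?_⟩
    rw [Fintype.linearCombination_apply, ← sum_finset_coe]
    simp

variable [TopologicalSpace E] [IsTopologicalAddGroup E] [ContinuousSMul ℝ E] [T2Space E]

lemma isClosed_coneHull_of_linearIndepOn {s : Finset ι} (hv : LinearIndepOn ℝ v s) :
    IsClosed (coneHull v s) := by
  rw [coneHull_eq_image_linearCombination]
  exact (LinearMap.isClosedEmbedding_of_injective (LinearMap.ker_eq_bot.mpr
    hv.fintypeLinearCombination_injective)).isClosedMap _ isClosed_Ici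

variable (v) in
theorem isClosed_coneHull (s : Finset ι) : IsClosed (coneHull v s) := by
  classical
  induction s using Finset.strongInduction with
  | H s ih =>
    by_cases hv : LinearIndepOn ℝ v s
    · exact isClosed_coneHull_of_linearIndepOn hv
    · rw [(coneHull_subset_biUnion_erase hv).antisymm
        (Set.iUnion₂_subset fun i _ => coneHull_mono (erase_subset i s))]
      exact s.finite_toSet.isClosed_biUnion fun i hi => ih _ (erase_ssubset hi)

theorem exists_strongDual_of_notMem_coneHull [LocallyConvexSpace ℝ E] [Fintype ι] {b : E}
    (hb : b ∉ coneHull v univ) : ∃ f : StrongDual ℝ E, (∀ i, 0 ≤ f (v i)) ∧ f b < 0 := by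
  classical
  let C : ProperCone ℝ E :=
    ⟨PointedCone.ofConeComb (coneHull v univ) ⟨0, zero_mem_coneHull⟩
      fun _ hx _ hy _ ha _ hb => smul_add_smul_mem_coneHull hx hy ha hb, isClosed_coneHull v univ⟩
  obtain ⟨f, hf, hfb⟩ := C.hyperplane_separation_point (x₀ := b) hb
  exact ⟨f, fun i => hf _ (mem_coneHull (mem_univ i)), hfb⟩

end ConeHull

lemma LinearMap.exists_apply_eq_dotProduct_add_mul {n : Type*} [Fintype n] [DecidableEq n]
    (f : ((n → ℝ) × ℝ) →ₗ[ℝ] ℝ) : ∃ (x : n → ℝ) (t : ℝ), ∀ w s, f (w, s) = w ⬝ᵥ x + s * t := by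
  refine ⟨(dotProductEquiv ℝ n).symm (f ∘ₗ .inl ℝ _ _), f (0, 1), fun w s => ?_⟩
  have hw : f (w, 0) = w ⬝ᵥ (dotProductEquiv ℝ n).symm (f ∘ₗ .inl ℝ _ _) := by
    rw [dotProduct_comm, ← dotProductEquiv_apply_apply, LinearEquiv.apply_symm_apply]
    rfl
  rw [show (w, s) = (w, 0) + s • (0, 1) by simp, map_add, map_smul, hw, smul_eq_mul]

section LinearProgram

variable {m n : Type*} [Fintype n] {A : Matrix m n ℝ} {b : m → ℝ} {c : n → ℝ}

variable (A b c) in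
def primalValues : Set ℝ := {v | ∃ x, b ≤ A *ᵥ x ∧ c ⬝ᵥ x = v}

lemma dotProduct_le_of_feasible [Fintype m] {x : n → ℝ} {y : m → ℝ} (hx : b ≤ A *ᵥ x)
    (hy : 0 ≤ y) (hyA : y ᵥ* A = c) : y ⬝ᵥ b ≤ c ⬝ᵥ x :=
  calc y ⬝ᵥ b ≤ y ⬝ᵥ (A *ᵥ x) := dotProduct_le_dotProduct_of_nonneg_left hx hy
    _ = c ⬝ᵥ x := by rw [dotProduct_mulVec, hyA]

lemma not_bddBelow_primalValues {x₀ x : n → ℝ} (hx₀ : b ≤ A *ᵥ x₀) (hx : 0 ≤ A *ᵥ x)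
    (hcx : c ⬝ᵥ x < 0) : ¬BddBelow (primalValues A b c) := by
  rintro ⟨z, hz⟩
  obtain ⟨r, hr⟩ := exists_nat_gt ((c ⬝ᵥ x₀ - z) / -(c ⬝ᵥ x))
  have hle := hz ⟨x₀ + (r : ℝ) • x, by
    simpa [mulVec_add, mulVec_smul] using le_add_of_le_of_nonneg hx₀ (smul_nonneg r.cast_nonneg hx),
    rfl⟩
  rw [div_lt_iff₀ (neg_pos.mpr hcx)] at hr
  simp only [dotProduct_add, dotProduct_smul, smul_eq_mul] at hle
  linarith

theorem exists_dual_feasible_sInf_le [Fintype m] (hfeas : ∃ x, b ≤ A *ᵥ x)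
    (hbdd : BddBelow (primalValues A b c)) :
    ∃ y, 0 ≤ y ∧ y ᵥ* A = c ∧ sInf (primalValues A b c) ≤ y ⬝ᵥ b := by
  classical
  set Q := sInf (primalValues A b c)
  by_contra! h
  -- `(0, -1)` is a slack generator: `(c, Q)` lies in the cone iff some `y ≥ 0` has `y ᵥ* A = c`
  -- and `Q ≤ y ⬝ᵥ b`.
  let v : Option m → (n → ℝ) × ℝ := fun o => o.elim (0, -1) fun i => (A i, b i)
  have hnotMem : (c, Q) ∉ coneHull v univ := by
    rintro ⟨w, hw, hsum⟩
    simp only [Fintype.sum_option, v, Option.elim, Prod.ext_iff, Prod.fst_add, Prod.snd_add,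
      Prod.fst_sum, Prod.snd_sum, Prod.smul_fst, Prod.smul_snd, smul_eq_mul] at hsum
    have hlt : ∑ i, w (some i) * b i < Q := h (fun i => w (some i)) (fun i => hw _ (mem_univ _))
      (by rw [vecMul_eq_sum]; simpa using hsum.1)
    linarith [hsum.2, hw none (mem_univ _)]
  obtain ⟨f, hf, hfQ⟩ := exists_strongDual_of_notMem_coneHull hnotMem
  obtain ⟨x, t, hft⟩ :=
    LinearMap.exists_apply_eq_dotProduct_add_mul (f : ((n → ℝ) × ℝ) →ₗ[ℝ] ℝ)
  simp only [ContinuousLinearMap.coe_coe] at hft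
  have ht : t ≤ 0 := by simpa [v, hft] using hf none
  have hAx : ∀ i, 0 ≤ (A *ᵥ x) i + b i * t := fun i => by
    have := hf (some i)
    simp only [v, Option.elim, hft] at this
    exact this
  rw [hft] at hfQ
  obtain ⟨x₀, hx₀⟩ := hfeas
  -- For `t < 0`, `x / (-t)` is feasible with value below `Q`; for `t = 0`, `x` is a recession
  -- direction along which the objective decreases.
  rcases ht.lt_or_eq with ht | rfl
  · have hx : b ≤ A *ᵥ ((-t)⁻¹ • x) := fun i => by
      rw [mulVec_smul, Pi.smul_apply, smul_eq_mul, le_inv_mul_iff₀ (neg_pos.mpr ht)]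
      linarith [hAx i]
    have hQ : Q ≤ c ⬝ᵥ ((-t)⁻¹ • x) := csInf_le hbdd ⟨_, hx, rfl⟩
    rw [dotProduct_smul, smul_eq_mul, le_inv_mul_iff₀ (neg_pos.mpr ht)] at hQ
    linarith
  · exact not_bddBelow_primalValues hx₀ (fun i => by simpa using hAx i) (by simpa using hfQ) hbdd

theorem exists_dual_optimal [Fintype m] (hfeas : ∃ x, b ≤ A *ᵥ x)
    (hbdd : BddBelow (primalValues A b c)) :
    ∃ y, 0 ≤ y ∧ y ᵥ* A = c ∧ y ⬝ᵥ b = sInf (primalValues A b c) := by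
  obtain ⟨y, hy, hyA, hle⟩ := exists_dual_feasible_sInf_le hfeas hbdd
  obtain ⟨x₀, hx₀⟩ := hfeas
  refine ⟨y, hy, hyA, le_antisymm (le_csInf ⟨_, x₀, hx₀, rfl⟩ ?_) hle⟩
  rintro _ ⟨x, hx, rfl⟩
  exact dotProduct_le_of_feasible hx hy hyA

end LinearProgram

namespace SecondStage

variable {N L : ℕ}

/-- Rows, with dual variables `(μ, λ, ν⁻, ν⁺)`: `p ≥ 0`, `p − Bθ ≥ d − u`, `−Fθ ≥ −fmax`,
`Fθ ≥ −fmax`; the columns are `(p, θ)`. -/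
def constraintMatrix (B : Matrix (Fin N) (Fin N) ℝ) (F : Matrix (Fin L) (Fin N) ℝ) :
    Matrix ((Fin N ⊕ Fin N) ⊕ (Fin L ⊕ Fin L)) (Fin N ⊕ Fin N) ℝ :=
  fromRows (fromBlocks 1 0 1 (-B)) (fromBlocks 0 (-F) 0 F)

def constraintBound (fmax : Fin L → ℝ) (u d : Fin N → ℝ) :
    (Fin N ⊕ Fin N) ⊕ (Fin L ⊕ Fin L) → ℝ :=
  Sum.elim (Sum.elim 0 (d - u)) (Sum.elim (-fmax) (-fmax))

def cost (β : Fin N → ℝ) : Fin N ⊕ Fin N → ℝ := Sum.elim β 0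

variable {B : Matrix (Fin N) (Fin N) ℝ} {F : Matrix (Fin L) (Fin N) ℝ} {β : Fin N → ℝ}
  {fmax : Fin L → ℝ} {u d : Fin N → ℝ}

lemma constraintBound_le_iff {p θ : Fin N → ℝ} :
    constraintBound fmax u d ≤ constraintMatrix B F *ᵥ Sum.elim p θ ↔
      0 ≤ p ∧ d - u ≤ p - B *ᵥ θ ∧ F *ᵥ θ ≤ fmax ∧ -fmax ≤ F *ᵥ θ := by
  simp [constraintBound, constraintMatrix, fromRows_mulVec, fromBlocks_mulVec, neg_mulVec,
    sub_eq_add_neg, and_assoc]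

lemma vecMul_constraintMatrix_eq_cost_iff {μ lam : Fin N → ℝ} {νm νp : Fin L → ℝ} :
    Sum.elim (Sum.elim μ lam) (Sum.elim νm νp) ᵥ* constraintMatrix B F = cost β ↔
      μ + lam = β ∧ Bᵀ *ᵥ lam = Fᵀ *ᵥ (νp - νm) := by
  simp only [constraintMatrix, cost, vecMul_fromRows, vecMul_fromBlocks, Sum.elim_comp_inl,
    Sum.elim_comp_inr, vecMul_one, vecMul_zero, vecMul_neg, zero_add, add_zero, funext_iff,
    Pi.add_apply, Pi.zero_apply, Pi.neg_apply, Pi.sub_apply, Sum.forall, Sum.elim_inl, Sum.elim_inr,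
    mulVec_transpose, sub_vecMul, and_congr_right_iff]
  exact fun _ => forall_congr' fun k => by constructor <;> intro h <;> linarith

lemma dotProduct_constraintBound {μ lam : Fin N → ℝ} {νm νp : Fin L → ℝ} :
    Sum.elim (Sum.elim μ lam) (Sum.elim νm νp) ⬝ᵥ constraintBound fmax u d =
      lam ⬝ᵥ (d - u) - fmax ⬝ᵥ (νp + νm) := by
  simp only [constraintBound, sumElim_dotProduct_sumElim, dotProduct_zero, dotProduct_sub,
    dotProduct_neg, add_dotProduct, dotProduct_comm fmax, zero_add]
  ring

lemma cost_dotProduct (p θ : Fin N → ℝ) : cost β ⬝ᵥ Sum.elim p θ = β ⬝ᵥ p := by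
  simp [cost]

lemma exists_constraintBound_le (hfmax : 0 ≤ fmax) :
    ∃ x, constraintBound fmax u d ≤ constraintMatrix B F *ᵥ x :=
  ⟨Sum.elim (fun i => max (d i - u i) 0) 0, constraintBound_le_iff.mpr
    ⟨fun i => le_max_right _ _, fun i => by simp, by simpa using hfmax, by simpa using hfmax⟩⟩

lemma bddBelow_primalValues (hβ : 0 ≤ β) :
    BddBelow (primalValues (constraintMatrix B F) (constraintBound fmax u d) (cost β)) := by
  refine ⟨0, ?_⟩
  rintro _ ⟨x, hx, rfl⟩
  obtain ⟨p, θ, rfl⟩ : ∃ p θ, x = Sum.elim p θ := ⟨_, _, (Sum.elim_comp_inl_inr x).symm⟩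
  rw [cost_dotProduct]
  exact dotProduct_nonneg_of_nonneg hβ (constraintBound_le_iff.mp hx).1

lemma Qval_eq_sInf_primalValues (hβ : 0 ≤ β) : Qval B F β fmax u d =
    sInf (primalValues (constraintMatrix B F) (constraintBound fmax u d) (cost β)) := by
  refine csInf_eq_csInf_of_forall_exists_le ?_ ?_
  · rintro _ ⟨g, θ, rfl, hbal, hlo, hhi⟩
    refine ⟨_, ⟨Sum.elim (fun i => max (g i) 0) θ,
      constraintBound_le_iff.mpr ⟨fun i => le_max_right _ _, fun i => ?_, hhi, hlo⟩, rfl⟩, ?_⟩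
    · simp only [Pi.sub_apply, ← hbal i]
      linarith [le_max_left (g i) 0]
    · rw [cost_dotProduct]
      rfl
  · rintro _ ⟨x, hx, rfl⟩
    obtain ⟨p, θ, rfl⟩ : ∃ p θ, x = Sum.elim p θ := ⟨_, _, (Sum.elim_comp_inl_inr x).symm⟩
    obtain ⟨hp, hbal, hhi, hlo⟩ := constraintBound_le_iff.mp hx
    have hg : B *ᵥ θ + d - u ≤ p := by
      rw [add_sub_assoc, add_comm]
      exact le_sub_iff_add_le.mp hbal
    refine ⟨_, ⟨B *ᵥ θ + d - u, θ, rfl, fun i => by simp, hlo, hhi⟩, ?_⟩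
    rw [cost_dotProduct]
    exact sum_le_sum fun i _ => mul_le_mul_of_nonneg_left (max_le (hg i) (hp i)) (hβ i)

end SecondStage

open SecondStage in
/-- Strong duality for the second-stage RLD linear program: for every `u, d` there is a
dual feasible triple `(λ, ν⁺, ν⁻)` (i.e. `0 ≤ λ ≤ β`, `ν⁺, ν⁻ ≥ 0`, `Bᵀλ = Fᵀ(ν⁺ − ν⁻)`)
whose dual objective value `λᵀ(d − u) − (fmax)ᵀ(ν⁺ + ν⁻)` equals `Q(u, d)`. -/
theorem strong_duality_second_stage {N L : ℕ}
    (B : Matrix (Fin N) (Fin N) ℝ) (F : Matrix (Fin L) (Fin N) ℝ)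
    (β : Fin N → ℝ) (fmax : Fin L → ℝ)
    (hβ : ∀ i, 0 ≤ β i) (hfmax : ∀ j, 0 ≤ fmax j)
    (u d : Fin N → ℝ) :
    ∃ (lam : Fin N → ℝ) (νp νm : Fin L → ℝ),
      (∀ i, 0 ≤ lam i) ∧ (∀ i, lam i ≤ β i) ∧
      (∀ j, 0 ≤ νp j) ∧ (∀ j, 0 ≤ νm j) ∧
      (∀ i, B.transpose.mulVec lam i = F.transpose.mulVec (νp - νm) i) ∧
      (∑ i, lam i * (d i - u i)) - (∑ j, fmax j * (νp j + νm j)) = Qval B F β fmax u d := by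
  obtain ⟨y, hy, hyA, hyb⟩ := exists_dual_optimal (A := constraintMatrix B F)
    (b := constraintBound fmax u d) (c := cost β) (exists_constraintBound_le hfmax)
    (bddBelow_primalValues hβ)
  obtain ⟨μ, lam, νm, νp, rfl⟩ : ∃ μ lam νm νp, y = Sum.elim (Sum.elim μ lam) (Sum.elim νm νp) :=
    ⟨_, _, _, _, by ext ((i | i) | (j | j)) <;> rfl⟩
  obtain ⟨hsum, hBF⟩ := vecMul_constraintMatrix_eq_cost_iff.mp hyA
  refine ⟨lam, νp, νm, fun i => hy (.inl (.inr i)), fun i => ?_, fun j => hy (.inr (.inr j)),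
    fun j => hy (.inr (.inl j)), congrFun hBF, ?_⟩
  · rw [← hsum]
    exact le_add_of_nonneg_left (hy (.inl (.inl i)))
  · rw [Qval_eq_sInf_primalValues hβ, ← hyb, dotProduct_constraintBound]
    rfl
end

section
/- Vector contraction inequality (Lemma 1, Maurer): let X be a set, x₁, …, x_M ∈ X, let H be a nonempty set of functions from X to ℝ^N such that for each m the set {h(x_m) : h ∈ H} ⊆ ℝ^N is bounded, and for each m = 1, …, M let ψ_m : ℝ^N → ℝ be C-Lipschitz with respect to the Euclidean norm. Then E_ξ[ sup_{h ∈ H} Σ_{m=1}^M ξ_m ψ_m(h(x_m)) ] ≤ √2 · C · E_{ξ'}[ sup_{h ∈ H} Σ_{m=1}^M Σ_{j=1}^N ξ'_{m,j} (h(x_m))_j ], where ξ is uniform over {−1,+1}^M and ξ' is uniform over {−1,+1}^{M×N}. -/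
/-!
Maurer's argument. Condition on all signs but one and let `a` be the remaining part of the
sum. For `t, t'` in the class, `ψ (v t) - ψ (v t') ≤ C ‖v t - v t'‖`, and Szarek's inequality
`‖u‖ ≤ √2 𝔼_w |⟨w, u⟩|` lets the pair of sign vectors `(w, -w)` realise this difference inside
the two suprema; so the single Rademacher term `ε ψ (v t)` may be replaced by
`√2 C ⟨w, v t⟩` with a fresh sign vector `w`. Replacing the terms one at a time proves the
inequality.

Szarek's inequality is Walsh–Fourier analysis on the cube: `f w = |⟨w, u⟩|` is even, so its
non-constant spectrum lives on sets of at least two elements, and the Poincaré inequality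
becomes `𝔼 f² - (𝔼 f)² ≤ 𝔼 f² / 2`, because flipping one sign changes `f` by at most `2 |u i|`.
-/

/-- The real sign `+1`/`−1` associated with a Boolean, used to enumerate sign vectors
`ξ ∈ {−1, +1}^I` as functions `I → Bool`. -/
noncomputable def sgn (b : Bool) : ℝ := if b then 1 else -1

open Bornology
open scoped Finset NNReal BigOperators

@[simp] lemma sgn_true : sgn true = 1 := if_pos rfl
@[simp] lemma sgn_false : sgn false = -1 := if_neg Bool.false_ne_true
@[simp] lemma sgn_not (b : Bool) : sgn (!b) = -sgn b := by cases b <;> simp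
@[simp] lemma sgn_mul_self (b : Bool) : sgn b * sgn b = 1 := by cases b <;> simp
@[simp] lemma abs_sgn (b : Bool) : |sgn b| = 1 := by cases b <;> simp

lemma expect_bool {K : Type*} [Semifield K] [CharZero K] (g : Bool → K) :
    𝔼 b, g b = (g true + g false) / 2 := by
  rw [Fintype.expect_eq_sum_div_card, Fintype.sum_bool, Fintype.card_bool, Nat.cast_ofNat]

lemma expect_fin_succ_pi {M : Type*} [AddCommMonoid M] [Module ℚ≥0 M] {α : Type*} [Fintype α]
    {n : ℕ} (g : (Fin (n + 1) → α) → M) :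
    𝔼 f, g f = 𝔼 a, 𝔼 f : Fin n → α, g (Fin.cons a f) := by
  rw [← Fintype.expect_equiv (Fin.consEquiv fun _ => α) (fun p => g (Fin.cons p.1 p.2)) g
    (fun _ => rfl), ← Finset.univ_product_univ,
    Finset.expect_product Finset.univ Finset.univ fun p => g (Fin.cons p.1 p.2)]

section SignVectors

variable {ι : Type*} [Fintype ι]

noncomputable def signSum (ε : ι → Bool) : EuclideanSpace ℝ ι →L[ℝ] ℝ :=
  ∑ j, sgn (ε j) • EuclideanSpace.proj j

@[simp] lemma signSum_apply (ε : ι → Bool) (u : EuclideanSpace ℝ ι) :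
    signSum ε u = ∑ j, sgn (ε j) * u j := by
  simp [signSum]

lemma signSum_not (ε : ι → Bool) (u : EuclideanSpace ℝ ι) :
    signSum (fun j => !ε j) u = -signSum ε u := by
  simp [Finset.sum_neg_distrib]

end SignVectors

section Walsh

variable {ι : Type*} [DecidableEq ι]

def flipAt (i : ι) (ε : ι → Bool) : ι → Bool := Function.update ε i (!ε i)

lemma flipAt_involutive (i : ι) : Function.Involutive (flipAt i) := by
  intro ε
  simp [flipAt]

lemma sgn_flipAt (i j : ι) (ε : ι → Bool) :
    sgn (flipAt i ε j) = (if j = i then -1 else 1) * sgn (ε j) := by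
  by_cases h : j = i
  · subst h; simp [flipAt]
  · simp [flipAt, h]

noncomputable def walsh (A : Finset ι) (ε : ι → Bool) : ℝ := ∏ i ∈ A, sgn (ε i)

lemma walsh_flipAt (A : Finset ι) (i : ι) (ε : ι → Bool) :
    walsh A (flipAt i ε) = (if i ∈ A then -1 else 1) * walsh A ε := by
  simp_rw [walsh, sgn_flipAt, Finset.prod_mul_distrib, Finset.prod_ite_eq']

variable [Fintype ι]

lemma expect_comp_flipAt {M : Type*} [AddCommMonoid M] [Module ℚ≥0 M] (i : ι)
    (f : (ι → Bool) → M) : 𝔼 ε, f (flipAt i ε) = 𝔼 ε, f ε :=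
  Fintype.expect_bijective _ (flipAt_involutive i).bijective _ _ fun _ => rfl

lemma expect_comp_not {M : Type*} [AddCommMonoid M] [Module ℚ≥0 M] (f : (ι → Bool) → M) :
    𝔼 ε : ι → Bool, f (fun j => !ε j) = 𝔼 ε, f ε := by
  have h : Function.Involutive fun (ε : ι → Bool) j => !ε j := fun ε => by simp
  exact Fintype.expect_bijective _ h.bijective _ _ fun _ => rfl

lemma expect_sgn_mul_sgn (j k : ι) :
    𝔼 ε : ι → Bool, sgn (ε j) * sgn (ε k) = if j = k then 1 else 0 := by
  split_ifs with h
  · simp [h]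
  · -- flipping the `j`-th sign negates the integrand
    have := expect_comp_flipAt j fun ε => sgn (ε j) * sgn (ε k)
    simp only [sgn_flipAt, if_pos, if_neg (Ne.symm h), one_mul, neg_mul,
      Finset.expect_neg_distrib] at this
    linarith

lemma expect_sq_sum_sgn_mul (a : ι → ℝ) :
    𝔼 ε : ι → Bool, (∑ j, sgn (ε j) * a j) ^ 2 = ∑ j, a j ^ 2 := by
  simp_rw [sq, Finset.sum_mul_sum, Finset.expect_sum_comm]
  simp [mul_mul_mul_comm _ (a _), ← Finset.expect_mul, expect_sgn_mul_sgn]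

lemma sum_walsh_mul_walsh (ε ε' : ι → Bool) :
    ∑ A, walsh A ε * walsh A ε' = if ε = ε' then (Fintype.card (ι → Bool) : ℝ) else 0 := by
  simp_rw [walsh, ← Finset.prod_mul_distrib, ← Finset.powerset_univ, ← Finset.prod_one_add]
  split_ifs with h
  · simp [h, one_add_one_eq_two]
  · obtain ⟨i, hi⟩ := Function.ne_iff.1 h
    refine Finset.prod_eq_zero (Finset.mem_univ i) ?_
    cases h1 : ε i <;> cases h2 : ε' i <;> simp_all

noncomputable def walshCoeff (f : (ι → Bool) → ℝ) (A : Finset ι) : ℝ := 𝔼 ε, f ε * walsh A ε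

lemma sum_walshCoeff_sq (f : (ι → Bool) → ℝ) : ∑ A, walshCoeff f A ^ 2 = 𝔼 ε, f ε ^ 2 := by
  have h : ∀ ε ε', ∑ A, f ε * walsh A ε * (f ε' * walsh A ε')
      = (if ε = ε' then (Fintype.card (ι → Bool) : ℝ) else 0) * (f ε * f ε') := fun ε ε' => by
    rw [← sum_walsh_mul_walsh, Finset.sum_mul]
    exact Finset.sum_congr rfl fun A _ => by ring
  simp_rw [walshCoeff, sq, Fintype.expect_mul_expect, ← Finset.expect_sum_comm, h,
    Finset.expect_boole_mul]

lemma walshCoeff_empty (f : (ι → Bool) → ℝ) : walshCoeff f ∅ = 𝔼 ε, f ε := by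
  simp [walshCoeff, walsh]

lemma walshCoeff_sub_comp_flipAt (f : (ι → Bool) → ℝ) (i : ι) (A : Finset ι) :
    walshCoeff (fun ε => f ε - f (flipAt i ε)) A = if i ∈ A then 2 * walshCoeff f A else 0 := by
  have h : 𝔼 ε, f (flipAt i ε) * walsh A ε = (if i ∈ A then -1 else 1) * walshCoeff f A := by
    rw [← expect_comp_flipAt i, walshCoeff, Finset.mul_expect]
    simp_rw [flipAt_involutive i _, walsh_flipAt]
    exact Finset.expect_congr rfl fun ε _ => by ring
  simp only [walshCoeff, sub_mul, Finset.expect_sub_distrib] at h ⊢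
  rw [h]
  split_ifs <;> ring

lemma walshCoeff_eq_zero_of_odd {f : (ι → Bool) → ℝ} (hf : ∀ ε, f (fun j => !ε j) = f ε)
    {A : Finset ι} (hA : Odd #A) : walshCoeff f A = 0 := by
  have h : walshCoeff f A = -walshCoeff f A := by
    conv_lhs => rw [walshCoeff, ← expect_comp_not]
    simp_rw [hf, walsh, sgn_not, Finset.prod_neg, hA.neg_one_pow, walshCoeff, walsh,
      ← Finset.expect_neg_distrib]
    exact Finset.expect_congr rfl fun ε _ => by ring
  linarith

lemma sum_expect_sq_sub_comp_flipAt (f : (ι → Bool) → ℝ) :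
    ∑ i, 𝔼 ε, (f ε - f (flipAt i ε)) ^ 2 = 4 * ∑ A, #A * walshCoeff f A ^ 2 := by
  simp_rw [← sum_walshCoeff_sq, walshCoeff_sub_comp_flipAt, ite_pow, Finset.sum_comm (γ := ι),
    Finset.mul_sum]
  refine Finset.sum_congr rfl fun A _ => ?_
  simp [Finset.sum_ite_mem]
  ring

lemma expect_sq_le_of_comp_not_eq {f : (ι → Bool) → ℝ} (hf : ∀ ε, f (fun j => !ε j) = f ε) :
    𝔼 ε, f ε ^ 2 ≤ (𝔼 ε, f ε) ^ 2 + (∑ i, 𝔼 ε, (f ε - f (flipAt i ε)) ^ 2) / 8 := by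
  rw [← sum_walshCoeff_sq, ← walshCoeff_empty, sum_expect_sq_sub_comp_flipAt]
  -- only sets of even, hence at least two, elements carry a nonzero coefficient besides `∅`
  have h : ∀ A : Finset ι, walshCoeff f A ^ 2
      ≤ (if A = ∅ then walshCoeff f ∅ ^ 2 else 0) + #A * walshCoeff f A ^ 2 / 2 := by
    intro A
    obtain rfl | hne := A.eq_empty_or_nonempty
    · simp
    obtain hA | hA := Nat.even_or_odd #A
    · have : (2 : ℝ) ≤ #A := by
        have := hne.card_pos
        obtain ⟨k, hk⟩ := hA
        exact_mod_cast (by omega : 2 ≤ #A)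
      rw [if_neg hne.ne_empty]
      nlinarith [sq_nonneg (walshCoeff f A)]
    · simp [walshCoeff_eq_zero_of_odd hf hA, hne.ne_empty]
  calc ∑ A, walshCoeff f A ^ 2
      ≤ ∑ A, ((if A = ∅ then walshCoeff f ∅ ^ 2 else 0) + #A * walshCoeff f A ^ 2 / 2) :=
        Finset.sum_le_sum fun A _ => h A
    _ = walshCoeff f ∅ ^ 2 + 4 * (∑ A, #A * walshCoeff f A ^ 2) / 8 := by
        rw [Finset.sum_add_distrib, Finset.sum_ite_eq', if_pos (Finset.mem_univ _),
          ← Finset.sum_div]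
        ring

lemma signSum_flipAt (i : ι) (ε : ι → Bool) (u : EuclideanSpace ℝ ι) :
    signSum (flipAt i ε) u = signSum ε u - 2 * sgn (ε i) * u i := by
  have h : ∀ j, sgn (flipAt i ε j) * u j = sgn (ε j) * u j - if j = i then 2 * sgn (ε j) * u j
      else 0 := fun j => by rw [sgn_flipAt]; split_ifs <;> ring
  simp only [signSum_apply, h, Finset.sum_sub_distrib, Finset.sum_ite_eq', Finset.mem_univ,
    if_true]

theorem norm_le_sqrt_two_mul_expect_abs_signSum (u : EuclideanSpace ℝ ι) :
    ‖u‖ ≤ √2 * 𝔼 ε, |signSum ε u| := by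
  set f : (ι → Bool) → ℝ := fun ε => |signSum ε u|
  have hf : ∀ ε, f (fun j => !ε j) = f ε := fun ε => by simp [f]
  have hsq : 𝔼 ε, f ε ^ 2 = ‖u‖ ^ 2 := by
    simp [f, expect_sq_sum_sgn_mul, EuclideanSpace.norm_sq_eq]
  have hflip : ∀ i ε, (f ε - f (flipAt i ε)) ^ 2 ≤ 4 * u i ^ 2 := by
    intro i ε
    have : |f ε - f (flipAt i ε)| ≤ 2 * |u i| := by
      simp only [f, signSum_flipAt]
      have := abs_abs_sub_abs_le_abs_sub (signSum ε u) (signSum ε u - 2 * sgn (ε i) * u i)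
      rwa [sub_sub_cancel, abs_mul, abs_mul, abs_sgn, mul_one, abs_two] at this
    nlinarith [sq_abs (f ε - f (flipAt i ε)), sq_abs (u i), abs_nonneg (f ε - f (flipAt i ε))]
  have hsum : ∑ i, 𝔼 ε, (f ε - f (flipAt i ε)) ^ 2 ≤ 4 * ‖u‖ ^ 2 := by
    rw [EuclideanSpace.norm_sq_eq, Finset.mul_sum]
    exact Finset.sum_le_sum fun i _ => Finset.expect_le Finset.univ_nonempty fun ε _ => by
      simpa using hflip i ε
  have := expect_sq_le_of_comp_not_eq hf
  refine le_of_pow_le_pow_left₀ two_ne_zero (by positivity) ?_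
  rw [mul_pow, Real.sq_sqrt zero_le_two]
  linarith

end Walsh

section Suprema

variable {T : Type*} {s : Set T}

lemma bddAbove_image_add {f g : T → ℝ} (hf : BddAbove (f '' s)) (hg : BddAbove (g '' s)) :
    BddAbove ((fun t => f t + g t) '' s) := by
  obtain ⟨A, hA⟩ := hf
  obtain ⟨B, hB⟩ := hg
  exact ⟨A + B, by rintro _ ⟨t, ht, rfl⟩; exact add_le_add (hA ⟨t, ht, rfl⟩) (hB ⟨t, ht, rfl⟩)⟩

lemma bddAbove_image_sum {κ : Type*} (u : Finset κ) {f : κ → T → ℝ}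
    (hf : ∀ k ∈ u, BddAbove (f k '' s)) : BddAbove ((fun t => ∑ k ∈ u, f k t) '' s) := by
  choose! B hB using hf
  exact ⟨∑ k ∈ u, B k, by
    rintro _ ⟨t, ht, rfl⟩; exact Finset.sum_le_sum fun k hk => hB k hk ⟨t, ht, rfl⟩⟩

lemma LipschitzWith.bddAbove_image_comp {E : Type*} [PseudoMetricSpace E] {K : ℝ≥0}
    {F : E → ℝ} (hF : LipschitzWith K F) {v : T → E} (hv : IsBounded (v '' s)) :
    BddAbove ((fun t => F (v t)) '' s) := by
  rw [← Set.image_image]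
  exact (hF.isBounded_image hv).bddAbove

lemma Real.sSup_image_const_mul {c : ℝ} (hc : 0 ≤ c) (f : T → ℝ) :
    sSup ((fun t => c * f t) '' s) = c * sSup (f '' s) := by
  rw [← smul_eq_mul, ← Real.sSup_smul_of_nonneg hc, ← Set.image_smul, Set.image_image]
  rfl

variable {ι : Type*} [Fintype ι] [DecidableEq ι]

theorem expect_sSup_add_sgn_mul_le (hs : s.Nonempty) {a : T → ℝ} (ha : BddAbove (a '' s))
    {v : T → EuclideanSpace ℝ ι} (hv : IsBounded (v '' s)) {C : ℝ≥0}
    {ψ : EuclideanSpace ℝ ι → ℝ} (hψ : LipschitzWith C ψ) :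
    𝔼 b, sSup ((fun t => a t + sgn b * ψ (v t)) '' s)
      ≤ 𝔼 w, sSup ((fun t => a t + √2 * C * signSum w (v t)) '' s) := by
  set S : (ι → Bool) → ℝ := fun w => sSup ((fun t => a t + √2 * C * signSum w (v t)) '' s)
  have hS : ∀ w, ∀ t ∈ s, a t + √2 * C * signSum w (v t) ≤ S w := fun w t ht =>
    le_csSup (bddAbove_image_add ha (((√2 * C) • signSum w).lipschitz.bddAbove_image_comp hv))
      ⟨t, ht, rfl⟩
  have hpair : ∀ t ∈ s, ∀ t' ∈ s, ∀ w,
      a t + a t' + √2 * C * |signSum w (v t - v t')| ≤ S w + S (fun j => !w j) := by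
    intro t ht t' ht' w
    have h₁ := hS w t ht
    have h₂ := hS w t' ht'
    have h₃ := hS (fun j => !w j) t ht
    have h₄ := hS (fun j => !w j) t' ht'
    simp only [signSum_not, mul_neg] at h₃ h₄
    rw [map_sub]
    rcases abs_cases (signSum w (v t) - signSum w (v t')) with ⟨h, _⟩ | ⟨h, _⟩
    · rw [h, mul_sub]; linarith
    · rw [h, mul_neg, mul_sub]; linarith
  have hkey : ∀ t ∈ s, ∀ t' ∈ s, (a t + ψ (v t)) + (a t' - ψ (v t')) ≤ 2 * 𝔼 w, S w := by
    intro t ht t' ht'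
    have hlip : ψ (v t) - ψ (v t') ≤ C * ‖v t - v t'‖ := by
      simpa [Real.dist_eq, dist_eq_norm] using
        (le_abs_self _).trans (hψ.dist_le_mul (v t) (v t'))
    calc (a t + ψ (v t)) + (a t' - ψ (v t')) ≤ a t + a t' + C * ‖v t - v t'‖ := by linarith
      _ ≤ a t + a t' + C * (√2 * 𝔼 w, |signSum w (v t - v t')|) := by
        gcongr
        exact norm_le_sqrt_two_mul_expect_abs_signSum _
      _ = 𝔼 w, (a t + a t' + √2 * C * |signSum w (v t - v t')|) := by
        rw [Finset.expect_add_distrib, Fintype.expect_const, ← Finset.mul_expect]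
        ring
      _ ≤ 𝔼 w, (S w + S (fun j => !w j)) :=
        Finset.expect_le_expect fun w _ => hpair t ht t' ht' w
      _ = 2 * 𝔼 w, S w := by
        rw [Finset.expect_add_distrib, expect_comp_not S]
        ring
  have := hs.to_subtype
  rw [expect_bool, sSup_image', sSup_image']
  simp only [sgn_true, sgn_false, one_mul, neg_one_mul, ← sub_eq_add_neg]
  linarith [ciSup_add_ciSup_le fun t t' : s => hkey t t.2 t' t'.2]

theorem expect_sSup_add_sum_sgn_mul_le (hs : s.Nonempty) {C : ℝ≥0} {M : ℕ}
    {ψ : Fin M → EuclideanSpace ℝ ι → ℝ} (hψ : ∀ m, LipschitzWith C (ψ m))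
    {v : Fin M → T → EuclideanSpace ℝ ι} (hv : ∀ m, IsBounded (v m '' s))
    {a : T → ℝ} (ha : BddAbove (a '' s)) :
    𝔼 ε : Fin M → Bool, sSup ((fun t => a t + ∑ m, sgn (ε m) * ψ m (v m t)) '' s)
      ≤ 𝔼 ε : Fin M → ι → Bool,
          sSup ((fun t => a t + ∑ m, √2 * C * signSum (ε m) (v m t)) '' s) := by
  induction M generalizing a with
  | zero => simp
  | succ M ih =>
    calc _ = 𝔼 b, 𝔼 ε : Fin M → Bool, sSup ((fun t => (a t + sgn b * ψ 0 (v 0 t))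
            + ∑ m, sgn (ε m) * ψ m.succ (v m.succ t)) '' s) := by
          simp only [expect_fin_succ_pi, Fin.sum_univ_succ, Fin.cons_zero, Fin.cons_succ,
            add_assoc]
      _ ≤ 𝔼 b, 𝔼 ε : Fin M → ι → Bool, sSup ((fun t => (a t + sgn b * ψ 0 (v 0 t))
            + ∑ m, √2 * C * signSum (ε m) (v m.succ t)) '' s) :=
          Finset.expect_le_expect fun b _ => ih (fun m => hψ m.succ) (fun m => hv m.succ)
            (bddAbove_image_add ha
              (((lipschitzWith_smul (sgn b)).comp (hψ 0)).bddAbove_image_comp (hv 0)))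
      _ = 𝔼 ε : Fin M → ι → Bool, 𝔼 b,
            sSup ((fun t => (a t + ∑ m, √2 * C * signSum (ε m) (v m.succ t))
              + sgn b * ψ 0 (v 0 t)) '' s) := by
          rw [Finset.expect_comm]
          simp only [add_right_comm _ (sgn _ * _)]
      _ ≤ 𝔼 ε : Fin M → ι → Bool, 𝔼 w,
            sSup ((fun t => (a t + ∑ m, √2 * C * signSum (ε m) (v m.succ t))
              + √2 * C * signSum w (v 0 t)) '' s) :=
          Finset.expect_le_expect fun ε _ => expect_sSup_add_sgn_mul_le hs
            (bddAbove_image_add ha (bddAbove_image_sum _ fun m _ =>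
              ((√2 * C) • signSum (ε m)).lipschitz.bddAbove_image_comp (hv m.succ)))
            (hv 0) (hψ 0)
      _ = _ := by
          rw [Finset.expect_comm, expect_fin_succ_pi]
          simp only [Fin.sum_univ_succ, Fin.cons_zero, Fin.cons_succ, ← add_assoc,
            add_right_comm _ (√2 * C * signSum _ (v 0 _))]

end Suprema

/-- Vector contraction inequality (Lemma 1, Maurer): for `C`-Lipschitz functions
`ψ_m : ℝ^N → ℝ` (Euclidean norm) and a class `H` of vector-valued functions with bounded
images at the sample points,
`E_ξ[sup_h Σ_m ξ_m ψ_m(h(x_m))] ≤ √2 C E_{ξ'}[sup_h Σ_m Σ_j ξ'_{m,j} (h(x_m))_j]`,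
where `ξ` is uniform over `{−1,+1}^M` and `ξ'` uniform over `{−1,+1}^{M×N}`. -/
theorem vector_contraction_inequality {X : Type*} {M N : ℕ} (x : Fin M → X)
    (H : Set (X → EuclideanSpace ℝ (Fin N))) (hH : H.Nonempty)
    (hbdd : ∀ m, Bornology.IsBounded ((fun h => h (x m)) '' H))
    (C : NNReal) (ψ : Fin M → EuclideanSpace ℝ (Fin N) → ℝ)
    (hψ : ∀ m, LipschitzWith C (ψ m)) :
    (2 ^ M : ℝ)⁻¹ *
        ∑ ε : Fin M → Bool, sSup ((fun h => ∑ m, sgn (ε m) * ψ m (h (x m))) '' H)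
      ≤ Real.sqrt 2 * (C : ℝ) *
        ((2 ^ (M * N) : ℝ)⁻¹ *
          ∑ ε : Fin M → Fin N → Bool,
            sSup ((fun h => ∑ m, ∑ j, sgn (ε m j) * (h (x m)) j) '' H)) := by
  have key := expect_sSup_add_sum_sgn_mul_le hH hψ hbdd (a := fun _ => 0)
    ⟨0, by rintro _ ⟨_, _, rfl⟩; rfl⟩
  simp only [zero_add, ← Finset.mul_sum, signSum_apply,
    Real.sSup_image_const_mul (by positivity : (0 : ℝ) ≤ √2 * C)] at key
  rw [Fintype.expect_eq_sum_div_card, Fintype.expect_eq_sum_div_card] at key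
  simp only [Fintype.card_fun, Fintype.card_bool, Fintype.card_fin, Nat.cast_pow, Nat.cast_ofNat,
    ← pow_mul, div_eq_inv_mul, ← Finset.mul_sum] at key
  rwa [mul_comm N, mul_left_comm] at key
end

section
/- Talagrand contraction principle for Rademacher averages: let F ⊆ ℝ^M be a nonempty bounded set and let φ : ℝ → ℝ be 1-Lipschitz. Then E_ξ[ sup_{t ∈ F} Σ_{m=1}^M ξ_m φ(t_m) ] ≤ E_ξ[ sup_{t ∈ F} Σ_{m=1}^M ξ_m t_m ], where ξ is uniform over {−1,+1}^M. -/
open Finset Function Bornology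

lemma sSup_add_sSup_le_of_lipschitzWith {α : Type*} {s : Set α} {φ : ℝ → ℝ}
    (hφ : LipschitzWith 1 φ) {a b : α → ℝ}
    (hplus : BddAbove ((fun t => a t + b t) '' s)) (hminus : BddAbove ((fun t => a t - b t) '' s)) :
    sSup ((fun t => a t + φ (b t)) '' s) + sSup ((fun t => a t - φ (b t)) '' s)
      ≤ sSup ((fun t => a t + b t) '' s) + sSup ((fun t => a t - b t) '' s) := by
  rcases s.eq_empty_or_nonempty with rfl | hs
  · simp
  set A := sSup ((fun t => a t + b t) '' s)
  set B := sSup ((fun t => a t - b t) '' s)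
  have hA : ∀ x ∈ s, a x + b x ≤ A := fun x hx => le_csSup hplus ⟨x, hx, rfl⟩
  have hB : ∀ x ∈ s, a x - b x ≤ B := fun x hx => le_csSup hminus ⟨x, hx, rfl⟩
  have hpair : ∀ x ∈ s, ∀ y ∈ s, a x + φ (b x) + (a y - φ (b y)) ≤ A + B := by
    intro x hx y hy
    have hφxy : φ (b x) - φ (b y) ≤ |b x - b y| := by
      simpa [Real.dist_eq] using (le_abs_self _).trans (hφ.dist_le_mul (b x) (b y))
    have hbxy : |b x - b y| ≤ A + B - a x - a y := abs_sub_le_iff.2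
      ⟨by linarith [hA x hx, hB y hy], by linarith [hA y hy, hB x hx]⟩
    linarith
  rw [← le_sub_iff_add_le]
  refine csSup_le (hs.image _) (Set.forall_mem_image.2 fun x hx => ?_)
  rw [le_sub_comm]
  exact csSup_le (hs.image _) (Set.forall_mem_image.2 fun y hy => by linarith [hpair x hx y hy])

variable {ι : Type*}

def contractOn [DecidableEq ι] (φ : ℝ → ℝ) (S : Finset ι) (t : ι → ℝ) : ι → ℝ :=
  fun m => if m ∈ S then φ (t m) else t m

lemma contractOn_insert [DecidableEq ι] (φ : ℝ → ℝ) {S : Finset ι} {k : ι}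
    (hk : k ∉ S) :
    contractOn φ (insert k S) = contractOn φ {k} ∘ contractOn φ S := by
  ext t m
  by_cases hm : m = k
  · subst hm; simp [contractOn, hk]
  · simp [contractOn, hm]

variable [Fintype ι]

noncomputable def rademacherSum (ε : ι → Bool) (t : ι → ℝ) : ℝ := ∑ m, sgn (ε m) * t m

noncomputable def rademacherSup (G : Set (ι → ℝ)) (ε : ι → Bool) : ℝ :=
  sSup (rademacherSum ε '' G)

lemma bddAbove_rademacherSum_image {G : Set (ι → ℝ)} (hG : IsBounded G) (ε : ι → Bool) :
    BddAbove (rademacherSum ε '' G) := by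
  have hcont : Continuous (rademacherSum ε) := by unfold rademacherSum; fun_prop
  exact (hG.isCompact_closure.bddAbove_image hcont.continuousOn).mono
    (Set.image_mono subset_closure)

lemma lipschitzWith_contractOn [DecidableEq ι] {φ : ℝ → ℝ} (hφ : LipschitzWith 1 φ)
    (S : Finset ι) :
    LipschitzWith 1 (contractOn φ S) :=
  LipschitzWith.of_dist_le_mul fun t u => by
    rw [NNReal.coe_one, one_mul, dist_pi_le_iff dist_nonneg]
    intro m
    unfold contractOn
    split_ifs
    · simpa using (hφ.dist_le_mul (t m) (u m)).trans (by simpa using dist_le_pi_dist t u m)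
    · exact dist_le_pi_dist t u m

variable [DecidableEq ι]

lemma rademacherSum_eq_add (ε : ι → Bool) (t : ι → ℝ) (k : ι) :
    rademacherSum ε t = rademacherSum ε (update t k 0) + sgn (ε k) * t k := by
  simp only [rademacherSum, Fintype.sum_eq_add_sum_compl k, update_self, mul_zero, zero_add]
  rw [add_comm]
  congr 1
  exact sum_congr rfl fun m hm => by
    rw [update_of_ne (by simpa using hm)]

lemma rademacherSum_update_update_zero (ε : ι → Bool) (t : ι → ℝ) (k : ι) (b : Bool) :
    rademacherSum (update ε k b) (update t k 0) = rademacherSum ε (update t k 0) :=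
  sum_congr rfl fun m _ => by
    by_cases hm : m = k
    · simp [hm]
    · simp [update_of_ne hm]

lemma rademacherSum_contractOn_singleton (φ : ℝ → ℝ) (ε : ι → Bool) (t : ι → ℝ)
    (k : ι) :
    rademacherSum ε (contractOn φ {k} t)
      = rademacherSum ε (update t k 0) + sgn (ε k) * φ (t k) := by
  rw [rademacherSum_eq_add _ _ k]
  congr 2
  · ext m
    by_cases hm : m = k
    · simp [hm]
    · simp [contractOn, hm]
  · simp [contractOn]

lemma rademacherSup_contractOn_singleton_add_le {φ : ℝ → ℝ} (hφ : LipschitzWith 1 φ)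
    {G : Set (ι → ℝ)} (hG : IsBounded G) (k : ι) (ε : ι → Bool) :
    rademacherSup (contractOn φ {k} '' G) ε
        + rademacherSup (contractOn φ {k} '' G) (update ε k (!ε k))
      ≤ rademacherSup G ε + rademacherSup G (update ε k (!ε k)) := by
  wlog hεk : ε k = true generalizing ε
  · have hflip : update (update ε k (!ε k)) k (!(update ε k (!ε k)) k) = ε := by simp
    have := this (update ε k (!ε k)) (by simpa using hεk)
    rw [hflip] at this
    linarith
  set ε' := update ε k (!ε k)
  set a : (ι → ℝ) → ℝ := fun t => rademacherSum ε (update t k 0)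
  have hsgn : sgn (ε k) = 1 := by simp [hεk, sgn]
  have hsgn' : sgn (ε' k) = -1 := by simp [ε', hεk, sgn]
  have ha' : ∀ t, rademacherSum ε' (update t k 0) = a t :=
    fun t => rademacherSum_update_update_zero ε t k _
  have hplus : rademacherSum ε '' G = (fun t => a t + t k) '' G :=
    Set.image_congr fun t _ => by rw [rademacherSum_eq_add _ _ k, hsgn, one_mul]
  have hminus : rademacherSum ε' '' G = (fun t => a t - t k) '' G :=
    Set.image_congr fun t _ => by rw [rademacherSum_eq_add _ _ k, ha', hsgn']; ring
  have hplusφ :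
      rademacherSum ε '' (contractOn φ {k} '' G) = (fun t => a t + φ (t k)) '' G := by
    rw [Set.image_image]
    exact Set.image_congr fun t _ => by rw [rademacherSum_contractOn_singleton, hsgn, one_mul]
  have hminusφ :
      rademacherSum ε' '' (contractOn φ {k} '' G) = (fun t => a t - φ (t k)) '' G := by
    rw [Set.image_image]
    exact Set.image_congr fun t _ => by rw [rademacherSum_contractOn_singleton, ha', hsgn']; ring
  unfold rademacherSup
  rw [hplus, hminus, hplusφ, hminusφ]
  exact sSup_add_sSup_le_of_lipschitzWith hφ (hplus ▸ bddAbove_rademacherSum_image hG ε)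
    (hminus ▸ bddAbove_rademacherSum_image hG ε')

lemma sum_rademacherSup_contractOn_singleton_le {φ : ℝ → ℝ} (hφ : LipschitzWith 1 φ)
    {G : Set (ι → ℝ)} (hG : IsBounded G) (k : ι) :
    ∑ ε, rademacherSup (contractOn φ {k} '' G) ε ≤ ∑ ε, rademacherSup G ε := by
  have hflip : Involutive fun ε : ι → Bool => update ε k (!ε k) := fun ε => by simp
  have hsum_flip (f : (ι → Bool) → ℝ) : ∑ ε, f (update ε k (!ε k)) = ∑ ε, f ε :=
    Fintype.sum_bijective _ hflip.bijective _ _ fun _ => rfl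
  have hpairs := sum_le_sum fun ε (_ : ε ∈ univ) =>
    rademacherSup_contractOn_singleton_add_le hφ hG k ε
  rw [sum_add_distrib, sum_add_distrib, hsum_flip, hsum_flip] at hpairs
  linarith

lemma sum_rademacherSup_contractOn_le {φ : ℝ → ℝ} (hφ : LipschitzWith 1 φ)
    {G : Set (ι → ℝ)} (hG : IsBounded G) (S : Finset ι) :
    ∑ ε, rademacherSup (contractOn φ S '' G) ε ≤ ∑ ε, rademacherSup G ε := by
  induction S using Finset.induction_on with
  | empty => rw [show contractOn φ ∅ = id from rfl, Set.image_id]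
  | insert k S hk ih =>
    rw [contractOn_insert φ hk, Set.image_comp]
    exact (sum_rademacherSup_contractOn_singleton_le hφ
      ((lipschitzWith_contractOn hφ S).isBounded_image hG) k).trans ih

theorem talagrand_contraction_general {M : ℕ} (F : Set (Fin M → ℝ))
    (hbdd : Bornology.IsBounded F) (φ : ℝ → ℝ) (hφ : LipschitzWith 1 φ) :
    (2 ^ M : ℝ)⁻¹ * ∑ ε : Fin M → Bool, sSup ((fun t => ∑ m, sgn (ε m) * φ (t m)) '' F)
      ≤ (2 ^ M : ℝ)⁻¹ * ∑ ε : Fin M → Bool, sSup ((fun t => ∑ m, sgn (ε m) * t m) '' F) := by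
  refine mul_le_mul_of_nonneg_left ?_ (by positivity)
  calc ∑ ε : Fin M → Bool, sSup ((fun t => ∑ m, sgn (ε m) * φ (t m)) '' F)
      = ∑ ε, rademacherSup (contractOn φ univ '' F) ε := by
        simp [rademacherSup, rademacherSum, contractOn, Set.image_image]
    _ ≤ ∑ ε, rademacherSup F ε := sum_rademacherSup_contractOn_le hφ hbdd univ

/-- Talagrand's contraction principle for Rademacher averages: for a nonempty bounded set
`F ⊆ ℝ^M` and a `1`-Lipschitz function `φ : ℝ → ℝ`,
`E_ξ[sup_{t ∈ F} Σ_m ξ_m φ(t_m)] ≤ E_ξ[sup_{t ∈ F} Σ_m ξ_m t_m]`,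
where `ξ` is uniform over `{−1,+1}^M`. -/
theorem talagrand_contraction {M : ℕ} (F : Set (Fin M → ℝ)) (hne : F.Nonempty)
    (hbdd : Bornology.IsBounded F) (φ : ℝ → ℝ) (hφ : LipschitzWith 1 φ) :
    (2 ^ M : ℝ)⁻¹ * ∑ ε : Fin M → Bool, sSup ((fun t => ∑ m, sgn (ε m) * φ (t m)) '' F)
      ≤ (2 ^ M : ℝ)⁻¹ * ∑ ε : Fin M → Bool, sSup ((fun t => ∑ m, sgn (ε m) * t m) '' F) :=
  talagrand_contraction_general F hbdd φ hφ
end
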